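/- arXiv:1512.04922 — 5 statements merged into one kernel-verified Lean document; each statement's English description precedes it below -/
import Mathlib

section
/- Let (T(α), δ(α)) for α ∈ [0,1] be a nested family of sequential tests (T(α) a.s. nonincreasing in α, δ(α) a.s. nondecreasing in α) each controlling Type I error at level α under the null measure P₀. Define p_n = inf{α : T(α) ≤ n and δ(α) = 1}. Then for any stopping time T with respect to the data filtration, P₀(p_T ≤ s) ≤ s for all s ∈ [0,1]; i.e., (p_n) is an always valid p-value process. -/
/-!
If `p_S(ω) ≤ s < β`, then some `p_n(ω)` is below `β`, so some level `α < β` has already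
rejected, `δ(α)(ω) = 1`; by nestedness `δ(β)(ω) = 1`. Hence `P₀(p_S ≤ s) ≤ P₀(δ(β) = 1) ≤ β`
for every `β > s`, and letting `β ↓ s` gives the claim.
-/

open MeasureTheory Filter Set

/-- The value of a p-value process at a (possibly infinite) stopping time,
with the convention `p_∞ = liminf_n p_n`. -/
noncomputable def stoppedP {Ω : Type*} (p : ℕ → Ω → ℝ) (T : Ω → ℕ∞) (ω : Ω) : ℝ :=
  if T ω = ⊤ then Filter.liminf (fun n => p n ω) Filter.atTop
  else p (T ω).toNat ω

open Topology

theorem exists_mem_lt_of_sInf_union_lt {A : Set ℝ} {c β : ℝ} (hA : BddBelow A) (hβ : β ≤ c)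
    (h : sInf ({c} ∪ A) < β) : ∃ α ∈ A, α < β := by
  obtain ⟨α, hα | hα, hαβ⟩ :=
    (csInf_lt_iff (hA.insert c) (insert_nonempty c A)).mp h
  · exact absurd (hα ▸ hαβ) hβ.not_gt
  · exact ⟨α, hα, hαβ⟩

theorem exists_lt_of_stoppedP_lt {Ω : Type*} {p : ℕ → Ω → ℝ} {S : Ω → ℕ∞} {ω : Ω} {C β : ℝ}
    (hp : ∀ n, p n ω ≤ C) (h : stoppedP p S ω < β) : ∃ n, p n ω < β := by
  unfold stoppedP at h
  split_ifs at h
  · have hbdd : IsBoundedUnder (· ≤ ·) atTop fun n => p n ω := isBoundedUnder_of ⟨C, hp⟩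
    exact (frequently_lt_of_liminf_lt hbdd.isCoboundedUnder_ge h).exists
  · exact ⟨_, h⟩

theorem ENNReal.le_ofReal_of_forall_lt {x : ENNReal} {s : ℝ}
    (h : ∀ β, s < β → x ≤ ENNReal.ofReal β) : x ≤ ENNReal.ofReal s := by
  have hlim : Tendsto ENNReal.ofReal (𝓝[>] s) (𝓝 (ENNReal.ofReal s)) :=
    ENNReal.continuous_ofReal.continuousAt.tendsto.mono_left nhdsWithin_le_nhds
  exact ge_of_tendsto hlim (eventually_nhdsWithin_of_forall h)

theorem rejects_of_stoppedP_lt {Ω : Type*} {T : ℝ → Ω → ℕ∞} {δ : ℝ → Ω → Bool}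
    {p : ℕ → Ω → ℝ} {S : Ω → ℕ∞} {ω : Ω} {β : ℝ}
    (hp : ∀ n, p n ω = sInf ({1} ∪ {α | α ∈ Icc (0:ℝ) 1 ∧ T α ω ≤ (n : ℕ∞) ∧ δ α ω = true}))
    (hmono : ∀ α ∈ Icc (0:ℝ) 1, ∀ γ ∈ Icc (0:ℝ) 1, α ≤ γ → δ α ω = true → δ γ ω = true)
    (hβ : β ≤ 1) (h : stoppedP p S ω < β) : δ β ω = true := by
  have hbdd : ∀ n : ℕ, BddBelow {α | α ∈ Icc (0:ℝ) 1 ∧ T α ω ≤ (n : ℕ∞) ∧ δ α ω = true} :=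
    fun n => ⟨0, fun α hα => hα.1.1⟩
  have hp_le : ∀ n, p n ω ≤ 1 := fun n =>
    (hp n).le.trans (csInf_le ((hbdd n).insert 1) (mem_union_left _ rfl))
  obtain ⟨n, hn⟩ := exists_lt_of_stoppedP_lt hp_le h
  rw [hp n] at hn
  obtain ⟨α, ⟨hα, -, hδα⟩, hαβ⟩ := exists_mem_lt_of_sInf_union_lt (hbdd n) hβ hn
  exact hmono α hα β ⟨hα.1.trans hαβ.le, hβ⟩ hαβ.le hδα

theorem always_valid_of_nested_sequential_tests_general
    {Ω : Type*} {m0 : MeasurableSpace Ω} (μ : Measure Ω) [IsProbabilityMeasure μ]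
    (ℱ : Filtration ℕ m0)
    (T : ℝ → Ω → ℕ∞) (δ : ℝ → Ω → Bool)
    -- each test controls Type I error at its level
    (hTypeI : ∀ α ∈ Icc (0:ℝ) 1, μ {ω | δ α ω = true} ≤ ENNReal.ofReal α)
    -- nestedness: a.s., T(α) is nonincreasing and δ(α) nondecreasing in α
    (hnested : ∀ᵐ ω ∂μ, ∀ α ∈ Icc (0:ℝ) 1, ∀ β ∈ Icc (0:ℝ) 1, α ≤ β →
      T β ω ≤ T α ω ∧ (δ α ω = true → δ β ω = true))
    -- the derived p-value process (infimum over the nested family; empty inf is 1)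
    (p : ℕ → Ω → ℝ)
    (hp : ∀ n ω, p n ω =
      sInf ({1} ∪ {α | α ∈ Icc (0:ℝ) 1 ∧ T α ω ≤ (n : ℕ∞) ∧ δ α ω = true})) :
    ∀ S : Ω → ℕ∞, (∀ n : ℕ, MeasurableSet[ℱ n] {ω | S ω ≤ n}) →
      ∀ s ∈ Icc (0:ℝ) 1, μ {ω | stoppedP p S ω ≤ s} ≤ ENNReal.ofReal s := by
  intro S _ s hs
  refine ENNReal.le_ofReal_of_forall_lt fun β hsβ => ?_
  rcases le_or_gt β 1 with hβ1 | hβ1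
  · have hsub : {ω | stoppedP p S ω ≤ s} ≤ᵐ[μ] {ω | δ β ω = true} :=
      hnested.mono fun ω hω hps =>
        rejects_of_stoppedP_lt (hp · ω) (fun α hα γ hγ hαγ => (hω α hα γ hγ hαγ).2) hβ1
          (lt_of_le_of_lt hps hsβ)
    exact (measure_mono_ae hsub).trans (hTypeI β ⟨hs.1.trans hsβ.le, hβ1⟩)
  · calc μ {ω | stoppedP p S ω ≤ s} ≤ 1 := prob_le_one
      _ ≤ ENNReal.ofReal β := by rw [ENNReal.one_le_ofReal]; exact hβ1.le

/-- the p-value process `p_n = inf {α : T(α) ≤ n, δ(α) = 1}` obtained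
from a nested family of sequential tests, each controlling Type I error at its level,
is always valid: for any stopping time `S`, `P₀(p_S ≤ s) ≤ s` for all `s ∈ [0,1]`. -/
theorem always_valid_of_nested_sequential_tests
    {Ω : Type*} {m0 : MeasurableSpace Ω} (μ : Measure Ω) [IsProbabilityMeasure μ]
    (ℱ : Filtration ℕ m0)
    (T : ℝ → Ω → ℕ∞) (δ : ℝ → Ω → Bool)
    -- each T(α) is a stopping time w.r.t. the data filtration
    (hT_stop : ∀ α ∈ Icc (0:ℝ) 1, ∀ n : ℕ, MeasurableSet[ℱ n] {ω | T α ω ≤ n})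
    -- each test controls Type I error at its level
    (hTypeI : ∀ α ∈ Icc (0:ℝ) 1, μ {ω | δ α ω = true} ≤ ENNReal.ofReal α)
    -- nestedness: a.s., T(α) is nonincreasing and δ(α) nondecreasing in α
    (hnested : ∀ᵐ ω ∂μ, ∀ α ∈ Icc (0:ℝ) 1, ∀ β ∈ Icc (0:ℝ) 1, α ≤ β →
      T β ω ≤ T α ω ∧ (δ α ω = true → δ β ω = true))
    -- the derived p-value process (infimum over the nested family; empty inf is 1)
    (p : ℕ → Ω → ℝ)
    (hp : ∀ n ω, p n ω =
      sInf ({1} ∪ {α | α ∈ Icc (0:ℝ) 1 ∧ T α ω ≤ (n : ℕ∞) ∧ δ α ω = true})) :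
    ∀ S : Ω → ℕ∞, (∀ n : ℕ, MeasurableSet[ℱ n] {ω | S ω ≤ n}) →
      ∀ s ∈ Icc (0:ℝ) 1, μ {ω | stoppedP p S ω ≤ s} ≤ ENNReal.ofReal s :=
  always_valid_of_nested_sequential_tests_general μ ℱ T δ hTypeI hnested p hp
end

section
/- For every m ≥ 1 and 0 ≤ α ≤ 1, the supremum over all super-uniform sub-probability densities f on [0,1] (i.e., nonnegative measurable f with F(x) = ∫₀^x f ≤ x for all x and F(1) ≤ 1) of the quantity Σ_{k=1}^m (1/k) ∫_{(k−1)α/m}^{kα/m} f(x) dx equals (α/m) Σ_{k=1}^m 1/k, attained at F(kα/m) = kα/m. -/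
/-!
Writing `F k` for the mass that `f` puts on `(0, kα/m]`, the quantity to bound is the Abel sum
`∑ (1/k) (F k - F (k-1))`. Summation by parts turns it into
`F m / m + ∑_{1 ≤ k < m} (1/k - 1/(k+1)) F k`, whose coefficients are nonnegative because
`1/k` decreases, so the constraints `F k ≤ kα/m` bound it by the value obtained for
`F k = kα/m`; the uniform density `f = 1` realises exactly that value.
-/

open MeasureTheory Set

theorem setIntegral_Ioc_eq_sub {E : Type*} [NormedAddCommGroup E] [NormedSpace ℝ E]
    {μ : Measure ℝ} {f : ℝ → E} {a b c : ℝ} (hca : c ≤ a) (hab : a ≤ b)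
    (hf : IntegrableOn f (Ioc c b) μ) :
    ∫ x in Ioc a b, f x ∂μ = ∫ x in Ioc c b, f x ∂μ - ∫ x in Ioc c a, f x ∂μ := by
  rw [eq_sub_iff_add_eq', ← Ioc_union_Ioc_eq_Ioc hca hab,
    setIntegral_union (Ioc_disjoint_Ioc_of_le le_rfl) measurableSet_Ioc
      (hf.mono_set (Ioc_subset_Ioc_right hab)) (hf.mono_set (Ioc_subset_Ioc_left hca))]

theorem sum_Icc_mul_sub_le_mul_of_nonpos (c G : ℕ → ℝ) (hc : AntitoneOn c (Ici 1))
    (hG0 : G 0 = 0) (n : ℕ) (hG : ∀ k ≤ n, G k ≤ 0) :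
    ∑ k ∈ Finset.Icc 1 n, c k * (G k - G (k - 1)) ≤ c n * G n := by
  induction n with
  | zero => simp [hG0]
  | succ n ih =>
    have hGn : G n ≤ 0 := hG n n.le_succ
    have hcn : (c n - c (n + 1)) * G n ≤ 0 := by
      rcases Nat.eq_zero_or_pos n with rfl | hn
      · simp [hG0]
      · exact mul_nonpos_of_nonneg_of_nonpos
          (sub_nonneg.2 (hc (mem_Ici.2 hn) (mem_Ici.2 (by omega)) n.le_succ)) hGn
    rw [Finset.sum_Icc_succ_top (by omega), Nat.add_sub_cancel]
    linarith [ih fun k hk => hG k (hk.trans n.le_succ)]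

theorem sum_Icc_mul_sub_le (c F : ℕ → ℝ) (d : ℝ) (hc : AntitoneOn c (Ici 1)) (n : ℕ)
    (hcn : 0 ≤ c n) (hF0 : F 0 = 0) (hF : ∀ k ≤ n, F k ≤ k * d) :
    ∑ k ∈ Finset.Icc 1 n, c k * (F k - F (k - 1)) ≤ d * ∑ k ∈ Finset.Icc 1 n, c k := by
  have hG := sum_Icc_mul_sub_le_mul_of_nonpos c (fun k => F k - k * d) hc (by simp [hF0]) n
    fun k hk => sub_nonpos.2 (hF k hk)
  have hshift : ∀ k ∈ Finset.Icc 1 n,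
      c k * ((F k - k * d) - (F (k - 1) - ((k - 1 : ℕ) : ℝ) * d))
        = c k * (F k - F (k - 1)) - d * c k := by
    intro k hk
    rw [Nat.cast_sub (Finset.mem_Icc.1 hk).1]
    ring
  rw [Finset.sum_congr rfl hshift, Finset.sum_sub_distrib, ← Finset.mul_sum] at hG
  nlinarith [sub_nonpos.2 (hF n le_rfl)]

theorem superuniform_density_sup_general
    (m : ℕ) (α : ℝ) (hα : α ∈ Icc (0:ℝ) 1) :
    IsGreatest
      {S : ℝ | ∃ f : ℝ → ℝ, Measurable f ∧ (∀ x, 0 ≤ f x) ∧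
        IntegrableOn f (Icc (0:ℝ) 1) ∧
        (∀ x ∈ Icc (0:ℝ) 1, (∫ t in Ioc (0:ℝ) x, f t) ≤ x) ∧
        (∫ t in Ioc (0:ℝ) 1, f t) ≤ 1 ∧
        S = ∑ k ∈ Finset.Icc 1 m,
          (1 / (k:ℝ)) * ∫ x in Ioc (((k:ℝ) - 1) * α / m) ((k:ℝ) * α / m), f x}
      ((α / m) * ∑ k ∈ Finset.Icc 1 m, (1 / (k:ℝ))) := by
  obtain ⟨hα0, hα1⟩ := hα
  have hgrid : ∀ k ≤ m, (k : ℝ) * α / m ∈ Icc (0 : ℝ) 1 := fun k hk =>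
    ⟨by positivity,
      div_le_one_of_le₀ (by nlinarith [(Nat.cast_le (α := ℝ)).2 hk]) m.cast_nonneg⟩
  have hprev : ∀ k ∈ Finset.Icc 1 m,
      ((k : ℝ) - 1) * α / m = ((k - 1 : ℕ) : ℝ) * α / m := fun k hk => by
    rw [Nat.cast_sub (Finset.mem_Icc.1 hk).1, Nat.cast_one]
  have hgap : ∀ k ∈ Finset.Icc 1 m, ((k : ℝ) - 1) * α / m ≤ k * α / m := fun k _ => by
    gcongr; linarith
  constructor
  · refine ⟨fun _ => 1, measurable_const, fun _ => zero_le_one,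
      continuousOn_const.integrableOn_Icc, fun x hx => by simp [hx.1], by simp, ?_⟩
    rw [Finset.mul_sum]
    refine Finset.sum_congr rfl fun k hk => ?_
    rw [setIntegral_const, Real.volume_real_Ioc_of_le (hgap k hk)]
    ring
  · rintro S ⟨f, -, -, hfi, hfle, -, rfl⟩
    set F : ℕ → ℝ := fun k => ∫ t in Ioc (0 : ℝ) (k * α / m), f t
    have hsummand : ∀ k ∈ Finset.Icc 1 m,
        1 / (k : ℝ) * ∫ x in Ioc (((k : ℝ) - 1) * α / m) (k * α / m), f x
          = 1 / (k : ℝ) * (F k - F (k - 1)) := fun k hk => by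
      have hkm := (Finset.mem_Icc.1 hk).2
      have hfk : IntegrableOn f (Ioc 0 (k * α / m)) :=
        hfi.mono_set (Ioc_subset_Icc_self.trans (Icc_subset_Icc le_rfl (hgrid k hkm).2))
      rw [setIntegral_Ioc_eq_sub ((hprev k hk).symm ▸ (hgrid (k - 1) (by omega)).1)
        (hgap k hk) hfk, hprev k hk]
    rw [Finset.sum_congr rfl hsummand]
    refine sum_Icc_mul_sub_le _ F _ ?_ m (by positivity) (by simp [F]) fun k hk => ?_
    · exact fun i hi j _ hij => one_div_le_one_div_of_le (Nat.cast_pos.2 hi) (Nat.cast_le.2 hij)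
    · rw [← mul_div_assoc]
      exact hfle _ (hgrid k hk)

/-- over all super-uniform sub-probability densities `f` on `[0,1]`
(nonnegative with `F(x) = ∫₀^x f ≤ x` and `F(1) ≤ 1`), the supremum of
`Σ_{k=1}^m (1/k) ∫_{(k−1)α/m}^{kα/m} f` equals `(α/m) Σ_{k=1}^m 1/k`, and it is attained
(at any `f` with `F(kα/m) = kα/m` for all `k`, e.g. `f = 1` on `[0,1]`). -/
theorem superuniform_density_sup
    (m : ℕ) (hm : 1 ≤ m) (α : ℝ) (hα : α ∈ Icc (0:ℝ) 1) :
    IsGreatest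
      {S : ℝ | ∃ f : ℝ → ℝ, Measurable f ∧ (∀ x, 0 ≤ f x) ∧
        IntegrableOn f (Icc (0:ℝ) 1) ∧
        (∀ x ∈ Icc (0:ℝ) 1, (∫ t in Ioc (0:ℝ) x, f t) ≤ x) ∧
        (∫ t in Ioc (0:ℝ) 1, f t) ≤ 1 ∧
        S = ∑ k ∈ Finset.Icc 1 m,
          (1 / (k:ℝ)) * ∫ x in Ioc (((k:ℝ) - 1) * α / m) ((k:ℝ) * α / m), f x}
      ((α / m) * ∑ k ∈ Finset.Icc 1 m, (1 / (k:ℝ))) :=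
  superuniform_density_sup_general m α hα
end

section
/- If X is a random variable that is super-uniform on [0,1] (P(X ≤ s) ≤ s for all s ∈ [0,1]), then for any m ≥ 1 and α ∈ [0,1], Σ_{k=1}^m (1/k) P((k−1)α/m < X ≤ kα/m) ≤ (α/m) Σ_{k=1}^m 1/k. -/
/-!
Let `p k` be the mass of the `k`-th bin `((k - 1) α / m, k α / m]`. Super-uniformity bounds the
partial sums `p 1 + ⋯ + p n ≤ P(X ≤ n α / m)` by `n α / m`. Since the weights `1 / k` decrease,
Abel summation shows that under these constraints `∑ p k / k` is largest when all of them are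
tight, i.e. for `p k = α / m`, and that value is the right-hand side.
-/

open MeasureTheory Set
open scoped ENNReal

theorem sum_mul_sub_le_of_partial_sums_le {w p : ℕ → ℝ} {c : ℝ} {n : ℕ}
    (hw : AntitoneOn w (Ici 1)) (hp : ∀ k < n, ∑ j ∈ Finset.Icc 1 k, p j ≤ k * c) :
    ∑ k ∈ Finset.Icc 1 n, w k * (p k - c) ≤ w n * (∑ k ∈ Finset.Icc 1 n, p k - n * c) := by
  induction n with
  | zero => simp
  | succ n ih =>
    have hslack : ∑ k ∈ Finset.Icc 1 n, p k - n * c ≤ 0 := sub_nonpos.2 (hp n n.lt_succ_self)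
    have hw_succ : w n * (∑ k ∈ Finset.Icc 1 n, p k - n * c)
        ≤ w (n + 1) * (∑ k ∈ Finset.Icc 1 n, p k - n * c) := by
      -- `w` is antitone only from `1` on (`1 / 0 = 0`); at `0` the slack vanishes
      rcases n.eq_zero_or_pos with rfl | hn
      · simp
      · exact mul_le_mul_of_nonpos_right (hw hn (by simp) n.le_succ) hslack
    rw [Finset.sum_Icc_succ_top (by omega), Finset.sum_Icc_succ_top (by omega)]
    calc _ ≤ w n * (∑ k ∈ Finset.Icc 1 n, p k - n * c) + w (n + 1) * (p (n + 1) - c) :=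
          add_le_add_left (ih fun k hk => hp k (by omega)) _
      _ ≤ _ := by grw [hw_succ]; push_cast; linarith

theorem sum_mul_le_mul_sum_of_partial_sums_le {w p : ℕ → ℝ} {c : ℝ} {m : ℕ}
    (hw : AntitoneOn w (Ici 1)) (hwm : 0 ≤ w m)
    (hp : ∀ n ≤ m, ∑ k ∈ Finset.Icc 1 n, p k ≤ n * c) :
    ∑ k ∈ Finset.Icc 1 m, w k * p k ≤ c * ∑ k ∈ Finset.Icc 1 m, w k := by
  have habel := sum_mul_sub_le_of_partial_sums_le hw fun k hk => hp k hk.le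
  have hlast := mul_nonpos_of_nonneg_of_nonpos hwm (sub_nonpos.2 (hp m le_rfl))
  simp only [mul_sub, Finset.sum_sub_distrib, ← Finset.sum_mul] at habel hlast ⊢
  linarith

theorem sum_measure_Ioc_eq_measure_Ioc_zero (ν : Measure ℝ) {h : ℝ} (hh : 0 ≤ h) (n : ℕ) :
    ∑ k ∈ Finset.Icc 1 n, ν (Ioc ((k - 1) * h) (k * h)) = ν (Ioc 0 (n * h)) := by
  induction n with
  | zero => simp
  | succ n ih =>
    have hmono : (n : ℝ) * h ≤ (n + 1) * h := by nlinarith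
    rw [Finset.sum_Icc_succ_top (by omega), ih]
    push_cast
    rw [add_sub_cancel_right, ← measure_union (Ioc_disjoint_Ioc_of_le le_rfl) measurableSet_Ioc,
      Ioc_union_Ioc_eq_Ioc (by positivity) hmono]

theorem sum_inv_mul_measure_Ioc_le (ν : Measure ℝ) [IsFiniteMeasure ν] {h : ℝ} (hh : 0 ≤ h)
    {m : ℕ} (hν : ∀ n ≤ m, ν (Iic (n * h)) ≤ ENNReal.ofReal (n * h)) :
    ∑ k ∈ Finset.Icc 1 m, (1 / (k : ℝ≥0∞)) * ν (Ioc ((k - 1) * h) (k * h))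
      ≤ ENNReal.ofReal (h * ∑ k ∈ Finset.Icc 1 m, (1 / (k : ℝ))) := by
  have hterm : ∀ k ∈ Finset.Icc 1 m, (1 / (k : ℝ≥0∞)) * ν (Ioc ((k - 1) * h) (k * h)) ≠ ∞ :=
    fun k hk => ENNReal.mul_ne_top
      (ENNReal.div_ne_top ENNReal.one_ne_top
        (by simpa using Nat.one_le_iff_ne_zero.1 (Finset.mem_Icc.1 hk).1))
      (measure_ne_top _ _)
  rw [ENNReal.le_ofReal_iff_toReal_le (ENNReal.sum_ne_top.2 hterm) (by positivity),
    ENNReal.toReal_sum hterm]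
  simp only [ENNReal.toReal_mul, one_div, ENNReal.toReal_inv, ENNReal.toReal_natCast]
  refine sum_mul_le_mul_sum_of_partial_sums_le
    (fun a ha b _ hab => inv_anti₀ (Nat.cast_pos.2 ha) (by exact_mod_cast hab)) (by positivity)
    fun n hn => ?_
  rw [← ENNReal.toReal_sum fun _ _ => measure_ne_top _ _, sum_measure_Ioc_eq_measure_Ioc_zero ν hh]
  calc (ν (Ioc 0 (n * h))).toReal ≤ (ν (Iic (n * h))).toReal :=
        ENNReal.toReal_mono (measure_ne_top _ _) (measure_mono Ioc_subset_Iic_self)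
    _ ≤ n * h := ENNReal.toReal_le_of_le_ofReal (by positivity) (hν n hn)

theorem superuniform_bin_sum_bound_general
    {Ω : Type*} {m0 : MeasurableSpace Ω} (μ : Measure Ω) [IsProbabilityMeasure μ]
    (X : Ω → ℝ) (hX : Measurable X)
    (hsuper : ∀ s ∈ Icc (0:ℝ) 1, μ {ω | X ω ≤ s} ≤ ENNReal.ofReal s)
    (m : ℕ) (α : ℝ) (hα : α ∈ Icc (0:ℝ) 1) :
    ∑ k ∈ Finset.Icc 1 m,
        (1 / (k : ℝ≥0∞)) * μ {ω | ((k:ℝ) - 1) * α / m < X ω ∧ X ω ≤ (k:ℝ) * α / m}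
      ≤ ENNReal.ofReal ((α / m) * ∑ k ∈ Finset.Icc 1 m, (1 / (k:ℝ))) := by
  obtain ⟨hα0, hα1⟩ := hα
  have hbin (k : ℕ) : μ {ω | ((k:ℝ) - 1) * α / m < X ω ∧ X ω ≤ (k:ℝ) * α / m}
      = μ.map X (Ioc ((k - 1) * (α / m)) (k * (α / m))) := by
    rw [Measure.map_apply hX measurableSet_Ioc]
    simp only [mul_div_assoc]
    rfl
  simp only [hbin]
  refine sum_inv_mul_measure_Ioc_le _ (by positivity) fun n hn => ?_
  rw [Measure.map_apply hX measurableSet_Iic]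
  refine hsuper _ ⟨by positivity, ?_⟩
  have hmα : (m : ℝ) * (α / m) ≤ α := by
    rcases eq_or_ne (m : ℝ) 0 with hm | hm
    · simpa [hm]
    · rw [mul_div_cancel₀ _ hm]
  calc (n : ℝ) * (α / m) ≤ m * (α / m) := by gcongr
    _ ≤ 1 := hmα.trans hα1

/-- if `X` is super-uniform on `[0,1]` (`P(X ≤ s) ≤ s` for `s ∈ [0,1]`), then
`Σ_{k=1}^m (1/k) P((k−1)α/m < X ≤ kα/m) ≤ (α/m) Σ_{k=1}^m 1/k`. -/
theorem superuniform_bin_sum_bound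
    {Ω : Type*} {m0 : MeasurableSpace Ω} (μ : Measure Ω) [IsProbabilityMeasure μ]
    (X : Ω → ℝ) (hX : Measurable X)
    (hsuper : ∀ s ∈ Icc (0:ℝ) 1, μ {ω | X ω ≤ s} ≤ ENNReal.ofReal s)
    (m : ℕ) (hm : 1 ≤ m) (α : ℝ) (hα : α ∈ Icc (0:ℝ) 1) :
    ∑ k ∈ Finset.Icc 1 m,
        (1 / (k : ℝ≥0∞)) * μ {ω | ((k:ℝ) - 1) * α / m < X ω ∧ X ω ≤ (k:ℝ) * α / m}
      ≤ ENNReal.ofReal ((α / m) * ∑ k ∈ Finset.Icc 1 m, (1 / (k:ℝ))) :=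
  superuniform_bin_sum_bound_general (m0 := m0) μ X hX hsuper m α hα
end

section
/- If for each i = 1, ..., m, (p_n^i) is an always valid p-value process and T is any stopping time, then applying the general-dependence Benjamini–Hochberg procedure (reject the j hypotheses with smallest p-values where j is maximal with p^{(j)}_T ≤ α j / (m Σ_{r=1}^m 1/r)) controls the false discovery rate at level α. -/
open MeasureTheory Filter Set
open scoped Classical

/-- Rejection set of the general-dependence Benjamini–Hochberg procedure (BH-G) at level `α`:
reject the `j` hypotheses with smallest p-values where `j` is maximal with
`p^{(j)} ≤ α j / (m Σ_{r=1}^m 1/r)`; equivalently, reject `i` iff for some `j`, at least `j`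
p-values lie below the `j`-th threshold and `pᵢ` does too. -/
noncomputable def bhgRejects (m : ℕ) (α : ℝ) (q : Fin m → ℝ) : Finset (Fin m) :=
  Finset.univ.filter (fun i => ∃ j ∈ Finset.Icc 1 m,
    j ≤ (Finset.univ.filter (fun i' =>
        q i' ≤ α * j / (m * ∑ r ∈ Finset.Icc 1 m, (1 / (r:ℝ))))).card ∧
    q i ≤ α * j / (m * ∑ r ∈ Finset.Icc 1 m, (1 / (r:ℝ))))

/-!
This is the Benjamini–Yekutieli argument. Write `τ_j = α j / (m H_m)` for the BH-G thresholds
and `R` for the rejection set. Every rejected p-value satisfies `p_i ≤ τ_{|R|}`: if `i` is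
rejected through an index `j`, the at least `j` p-values below `τ_j` are all rejected, so
`j ≤ |R|`. The weights `w_k = 1/(k(k+1)) + [k = m]/(m+1)` telescope to `∑_{k=r}^m w_k = 1/r`,
so pointwise, whatever the dependence, `1[i ∈ R] / |R| ≤ ∑_k w_k 1[p_i ≤ τ_k]`. Super-uniformity of `p_i` at the
stopping time bounds `P(p_i ≤ τ_k) ≤ τ_k`, and `∑_k w_k τ_k = α/m` because `∑_k k w_k = H_m`;
summing over at most `m` true nulls gives `FDR ≤ α`.
-/

section Measurability

variable {Ω : Type*} [MeasurableSpace Ω]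

theorem MeasureTheory.IsStoppingTime.measurable_enat {ℱ : Filtration ℕ ‹MeasurableSpace Ω›}
    {S : Ω → ℕ∞} (hS : IsStoppingTime ℱ S) : Measurable S :=
  ENat.measurable_iff.2 fun n => ℱ.le n _ (hS.measurableSet_eq_of_countable n)

theorem measurable_stoppedP {f : ℕ → Ω → ℝ} (hf : ∀ n, Measurable (f n)) {S : Ω → ℕ∞}
    (hS : Measurable S) : Measurable (stoppedP f S) := by
  have hstop : Measurable fun ω => f (S ω).toNat ω :=
    (measurable_from_prod_countable_left (f := fun x : Ω × ℕ => f x.2 x.1) hf).comp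
      (measurable_id.prodMk ((measurable_from_top (f := ENat.toNat)).comp hS))
  exact Measurable.ite (hS (measurableSet_singleton ⊤)) (Measurable.liminf hf) hstop

end Measurability

section SuperUniform

variable {Ω : Type*} [MeasurableSpace Ω] {μ : Measure Ω}

def SuperUniform (μ : Measure Ω) (X : Ω → ℝ) : Prop :=
  ∀ s ∈ Icc (0 : ℝ) 1, μ {ω | X ω ≤ s} ≤ ENNReal.ofReal s

theorem SuperUniform.measureReal_le [IsProbabilityMeasure μ] {X : Ω → ℝ}
    (hX : SuperUniform μ X) {s : ℝ} (hs : 0 ≤ s) : μ.real {ω | X ω ≤ s} ≤ s := by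
  rcases le_total s 1 with hs1 | hs1
  · exact ENNReal.toReal_le_of_le_ofReal hs (hX s ⟨hs, hs1⟩)
  · exact measureReal_le_one.trans hs1

theorem integrable_sum_indicator_Iic_comp [IsFiniteMeasure μ] {X : Ω → ℝ} (hX : Measurable X)
    {ι : Type*} (s : Finset ι) (t c : ι → ℝ) :
    Integrable (fun ω => ∑ k ∈ s, (Iic (t k)).indicator (fun _ => c k) (X ω)) μ :=
  integrable_finsetSum s fun k _ => (integrable_const (c k)).indicator (hX measurableSet_Iic)

theorem SuperUniform.integral_sum_indicator_Iic_le [IsProbabilityMeasure μ] {X : Ω → ℝ}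
    (hU : SuperUniform μ X) (hX : Measurable X) {ι : Type*} (s : Finset ι) {t c : ι → ℝ}
    (ht : ∀ k ∈ s, 0 ≤ t k) (hc : ∀ k ∈ s, 0 ≤ c k) :
    ∫ ω, ∑ k ∈ s, (Iic (t k)).indicator (fun _ => c k) (X ω) ∂μ ≤ ∑ k ∈ s, t k * c k := by
  have hmeas : ∀ k, MeasurableSet {ω | X ω ≤ t k} := fun k => hX measurableSet_Iic
  change ∫ ω, ∑ k ∈ s, {ω | X ω ≤ t k}.indicator (fun _ => c k) ω ∂μ ≤ _
  rw [integral_finsetSum s fun k _ => (integrable_const (c k)).indicator (hmeas k)]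
  refine Finset.sum_le_sum fun k hk => ?_
  rw [integral_indicator_const _ (hmeas k), smul_eq_mul]
  exact mul_le_mul_of_nonneg_right (hU.measureReal_le (ht k hk)) (hc k hk)

end SuperUniform

section BHG

variable {m : ℕ} {α : ℝ}

noncomputable def bhgThreshold (m : ℕ) (α : ℝ) (j : ℕ) : ℝ :=
  α * j / (m * ∑ r ∈ Finset.Icc 1 m, (1 / (r:ℝ)))

theorem bhgThreshold_nonneg (hα : 0 ≤ α) (j : ℕ) : 0 ≤ bhgThreshold m α j := by
  unfold bhgThreshold
  positivity

theorem bhgThreshold_mono (hα : 0 ≤ α) : Monotone (bhgThreshold m α) := by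
  intro j k hjk
  unfold bhgThreshold
  gcongr

theorem mem_bhgRejects {q : Fin m → ℝ} {i : Fin m} :
    i ∈ bhgRejects m α q ↔ ∃ j ∈ Finset.Icc 1 m,
      j ≤ (Finset.univ.filter fun i' => q i' ≤ bhgThreshold m α j).card ∧
      q i ≤ bhgThreshold m α j := by
  simp [bhgRejects, bhgThreshold]

theorem le_bhgThreshold_card_of_mem_bhgRejects (hα : 0 ≤ α) {q : Fin m → ℝ} {i : Fin m}
    (hi : i ∈ bhgRejects m α q) : q i ≤ bhgThreshold m α (bhgRejects m α q).card := by
  obtain ⟨j, hj, hjcard, hqi⟩ := mem_bhgRejects.1 hi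
  have hsub : Finset.univ.filter (fun i' => q i' ≤ bhgThreshold m α j) ⊆ bhgRejects m α q :=
    fun i' hi' => mem_bhgRejects.2 ⟨j, hj, hjcard, (Finset.mem_filter.1 hi').2⟩
  exact hqi.trans (bhgThreshold_mono hα (hjcard.trans (Finset.card_le_card hsub)))

noncomputable def bhgWeight (m k : ℕ) : ℝ :=
  1 / ((k : ℝ) * (k + 1)) + if k = m then 1 / ((m : ℝ) + 1) else 0

theorem bhgWeight_nonneg (m k : ℕ) : 0 ≤ bhgWeight m k := by
  unfold bhgWeight
  split_ifs <;> positivity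

theorem sum_Icc_one_div_mul_succ {r : ℕ} (hr : 1 ≤ r) (hrm : r ≤ m) :
    ∑ k ∈ Finset.Icc r m, 1 / ((k : ℝ) * (k + 1)) = 1 / r - 1 / (m + 1) := by
  have htel := Finset.sum_Icc_sub hrm fun k => -1 / (k : ℝ)
  push_cast at htel
  rw [Finset.sum_congr rfl fun k hk => ?_, htel]
  · ring
  have hk : (0 : ℝ) < k := by exact_mod_cast hr.trans (Finset.mem_Icc.1 hk).1
  field_simp
  ring

theorem sum_bhgWeight_Icc {r : ℕ} (hr : 1 ≤ r) (hrm : r ≤ m) :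
    ∑ k ∈ Finset.Icc r m, bhgWeight m k = 1 / r := by
  simp only [bhgWeight]
  rw [Finset.sum_add_distrib, sum_Icc_one_div_mul_succ hr hrm,
    Finset.sum_ite_eq' _ _ _, if_pos (Finset.mem_Icc.2 ⟨hrm, le_rfl⟩)]
  ring

theorem sum_natCast_mul_bhgWeight :
    ∑ k ∈ Finset.Icc 1 m, (k : ℝ) * bhgWeight m k = ∑ k ∈ Finset.Icc 1 m, 1 / (k : ℝ) := by
  rcases Nat.eq_zero_or_pos m with rfl | hm
  · simp
  have hterm : ∀ k ∈ Finset.Icc 1 m, (k : ℝ) * bhgWeight m k =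
      1 / k - 1 / (k * (k + 1)) + if k = m then (m : ℝ) / (m + 1) else 0 := by
    intro k hk
    have hk : (1 : ℝ) ≤ k := by exact_mod_cast (Finset.mem_Icc.1 hk).1
    unfold bhgWeight
    split_ifs with hkm
    · subst hkm; field_simp; ring
    · field_simp; ring
  rw [Finset.sum_congr rfl hterm, Finset.sum_add_distrib, Finset.sum_sub_distrib,
    sum_Icc_one_div_mul_succ le_rfl hm, Finset.sum_ite_eq' _ _ _,
    if_pos (Finset.mem_Icc.2 ⟨hm, le_rfl⟩)]
  field_simp
  ring

theorem sum_bhgThreshold_mul_bhgWeight :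
    ∑ k ∈ Finset.Icc 1 m, bhgThreshold m α k * bhgWeight m k = α / m := by
  rcases Nat.eq_zero_or_pos m with rfl | hm
  · simp
  have hH : 0 < ∑ r ∈ Finset.Icc 1 m, (1 / (r:ℝ)) :=
    Finset.sum_pos (fun r hr => by have := (Finset.mem_Icc.1 hr).1; positivity)
      ⟨1, Finset.mem_Icc.2 ⟨le_rfl, hm⟩⟩
  have hτ : ∀ k, bhgThreshold m α k = α / (m * ∑ r ∈ Finset.Icc 1 m, (1 / (r:ℝ))) * k :=
    fun k => by rw [bhgThreshold]; ring
  simp_rw [hτ, mul_assoc, ← Finset.mul_sum, sum_natCast_mul_bhgWeight]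
  field_simp

noncomputable def bhgMajorant (m : ℕ) (α x : ℝ) : ℝ :=
  ∑ k ∈ Finset.Icc 1 m, (Iic (bhgThreshold m α k)).indicator (fun _ => bhgWeight m k) x

theorem bhgMajorant_nonneg (x : ℝ) : 0 ≤ bhgMajorant m α x :=
  Finset.sum_nonneg fun k _ => indicator_nonneg (fun _ _ => bhgWeight_nonneg m k) x

theorem one_div_le_bhgMajorant (hα : 0 ≤ α) {r : ℕ} (hr : 1 ≤ r) (hrm : r ≤ m) {x : ℝ}
    (hx : x ≤ bhgThreshold m α r) : 1 / (r : ℝ) ≤ bhgMajorant m α x :=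
  calc 1 / (r : ℝ) = ∑ k ∈ Finset.Icc r m, bhgWeight m k := (sum_bhgWeight_Icc hr hrm).symm
    _ = ∑ k ∈ Finset.Icc r m, (Iic (bhgThreshold m α k)).indicator (fun _ => bhgWeight m k) x :=
      Finset.sum_congr rfl fun k hk =>
        (indicator_of_mem (show x ∈ Iic (bhgThreshold m α k) from
          hx.trans (bhgThreshold_mono hα (Finset.mem_Icc.1 hk).1)) (fun _ => bhgWeight m k)).symm
    _ ≤ bhgMajorant m α x :=
      Finset.sum_le_sum_of_subset_of_nonneg (Finset.Icc_subset_Icc_left hr)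
        fun k _ _ => indicator_nonneg (fun _ _ => bhgWeight_nonneg m k) x

theorem fdp_bhgRejects_le_sum_bhgMajorant (hα : 0 ≤ α) (q : Fin m → ℝ) (N : Finset (Fin m)) :
    ((bhgRejects m α q ∩ N).card : ℝ) / max 1 ((bhgRejects m α q).card : ℝ) ≤
      ∑ i ∈ N, bhgMajorant m α (q i) := by
  set R := bhgRejects m α q
  have hcard : ((R ∩ N).card : ℝ) = ∑ i ∈ N, if i ∈ R then 1 else 0 := by
    rw [Finset.sum_ite_mem, Finset.sum_const, nsmul_eq_mul, mul_one, Finset.inter_comm]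
  rw [hcard, Finset.sum_div]
  refine Finset.sum_le_sum fun i _ => ?_
  split_ifs with hi
  · have hR : 1 ≤ R.card := Finset.card_pos.2 ⟨i, hi⟩
    rw [max_eq_right (by exact_mod_cast hR)]
    exact one_div_le_bhgMajorant hα hR (Finset.card_le_univ R |>.trans_eq (Fintype.card_fin m))
      (le_bhgThreshold_card_of_mem_bhgRejects hα hi)
  · rw [zero_div]
    exact bhgMajorant_nonneg _

theorem sum_fin_const_div_le (hα : 0 ≤ α) (N : Finset (Fin m)) :
    ∑ _i ∈ N, α / m ≤ α := by
  rw [Finset.sum_const, nsmul_eq_mul]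
  rcases Nat.eq_zero_or_pos m with rfl | hm
  · simpa using hα
  calc (N.card : ℝ) * (α / m) ≤ m * (α / m) := by
        gcongr
        exact_mod_cast (Finset.card_le_univ N).trans_eq (Fintype.card_fin m)
    _ = α := mul_div_cancel₀ _ (by positivity)

end BHG

section Expectation

variable {Ω : Type*} [MeasurableSpace Ω] {μ : Measure Ω} {X : Ω → ℝ}

theorem integrable_bhgMajorant_comp [IsFiniteMeasure μ] (hX : Measurable X) (m : ℕ) (α : ℝ) :
    Integrable (fun ω => bhgMajorant m α (X ω)) μ :=
  integrable_sum_indicator_Iic_comp hX _ _ _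

theorem SuperUniform.integral_bhgMajorant_le [IsProbabilityMeasure μ] (hU : SuperUniform μ X)
    (hX : Measurable X) (m : ℕ) {α : ℝ} (hα : 0 ≤ α) :
    ∫ ω, bhgMajorant m α (X ω) ∂μ ≤ α / m := by
  rw [← sum_bhgThreshold_mul_bhgWeight]
  exact hU.integral_sum_indicator_Iic_le hX _ (fun k _ => bhgThreshold_nonneg hα k)
    fun k _ => bhgWeight_nonneg m k

end Expectation

theorem bh_general_sequential_fdr_general
    {Ω : Type*} {m0 : MeasurableSpace Ω} (μ : Measure Ω) [IsProbabilityMeasure μ]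
    (ℱ : Filtration ℕ m0)
    (m : ℕ)
    (p : Fin m → ℕ → Ω → ℝ)
    (hadapted : ∀ i n, Measurable[ℱ n] (p i n))
    (Null : Finset (Fin m))
    -- always validity of each truly null p-value process
    (hAV : ∀ i ∈ Null, ∀ S : Ω → ℕ∞, (∀ n : ℕ, MeasurableSet[ℱ n] {ω | S ω ≤ n}) →
      ∀ s ∈ Icc (0:ℝ) 1, μ {ω | stoppedP (p i) S ω ≤ s} ≤ ENNReal.ofReal s)
    (α : ℝ) (hα : α ∈ Ioo (0:ℝ) 1)
    (S : Ω → ℕ∞) (hS : ∀ n : ℕ, MeasurableSet[ℱ n] {ω | S ω ≤ n}) :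
    (∫ ω, (if S ω = ⊤ then (0:ℝ) else
        ((bhgRejects m α (fun i => stoppedP (p i) S ω) ∩ Null).card : ℝ) /
          max 1 ((bhgRejects m α (fun i => stoppedP (p i) S ω)).card : ℝ)) ∂μ) ≤ α := by
  have hα0 : 0 ≤ α := hα.1.le
  have hSstop : IsStoppingTime ℱ S := hS
  have hq : ∀ i, Measurable (stoppedP (p i) S) := fun i =>
    measurable_stoppedP (fun n => (hadapted i n).mono (ℱ.le n) le_rfl) hSstop.measurable_enat
  have hint : Integrable (fun ω => ∑ i ∈ Null, bhgMajorant m α (stoppedP (p i) S ω)) μ :=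
    integrable_finsetSum _ fun i _ => integrable_bhgMajorant_comp (hq i) m α
  calc _ ≤ ∫ ω, ∑ i ∈ Null, bhgMajorant m α (stoppedP (p i) S ω) ∂μ := by
        refine integral_mono_of_nonneg (ae_of_all _ fun ω => ?_) hint (ae_of_all _ fun ω => ?_)
        · dsimp only
          split_ifs <;> positivity
        · dsimp only
          split_ifs
          · exact Finset.sum_nonneg fun i _ => bhgMajorant_nonneg _
          · exact fdp_bhgRejects_le_sum_bhgMajorant hα0 _ Null
    _ = ∑ i ∈ Null, ∫ ω, bhgMajorant m α (stoppedP (p i) S ω) ∂μ :=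
        integral_finsetSum _ fun i _ => integrable_bhgMajorant_comp (hq i) m α
    _ ≤ ∑ _i ∈ Null, α / m :=
        Finset.sum_le_sum fun i hi =>
          SuperUniform.integral_bhgMajorant_le (hAV i hi S hS) (hq i) m hα0
    _ ≤ α := sum_fin_const_div_le hα0 Null

/-- applying BH-G to always valid p-value processes evaluated at an arbitrary
stopping time controls the false discovery rate at level `α` (errors on `{T = ∞}` count as
zero); no independence across the `m` processes is assumed. -/
theorem bh_general_sequential_fdr
    {Ω : Type*} {m0 : MeasurableSpace Ω} (μ : Measure Ω) [IsProbabilityMeasure μ]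
    (ℱ : Filtration ℕ m0)
    (m : ℕ) (hm : 1 ≤ m)
    (p : Fin m → ℕ → Ω → ℝ)
    (hadapted : ∀ i n, Measurable[ℱ n] (p i n))
    (Null : Finset (Fin m))
    -- always validity of each truly null p-value process
    (hAV : ∀ i ∈ Null, ∀ S : Ω → ℕ∞, (∀ n : ℕ, MeasurableSet[ℱ n] {ω | S ω ≤ n}) →
      ∀ s ∈ Icc (0:ℝ) 1, μ {ω | stoppedP (p i) S ω ≤ s} ≤ ENNReal.ofReal s)
    (α : ℝ) (hα : α ∈ Ioo (0:ℝ) 1)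
    (S : Ω → ℕ∞) (hS : ∀ n : ℕ, MeasurableSet[ℱ n] {ω | S ω ≤ n}) :
    (∫ ω, (if S ω = ⊤ then (0:ℝ) else
        ((bhgRejects m α (fun i => stoppedP (p i) S ω) ∩ Null).card : ℝ) /
          max 1 ((bhgRejects m α (fun i => stoppedP (p i) S ω)).card : ℝ)) ∂μ) ≤ α :=
  bh_general_sequential_fdr_general μ ℱ m p hadapted Null hAV α hα S hS
end

section
/- There exist independent always valid p-value processes and a stopping time T for which applying BH-I to the stopped p-values inflates FDR above α. Specifically, with m = 2: let p_n¹ = U for all n with U ~ Uniform(0,1) (hypothesis 1 null), p₁² = 1 and p_n² = 0 for n ≥ 2 (hypothesis 2 non-null), and T = 1 if U ≤ α/2, else T = 2. Then the FDR of BH-I at level α applied to (p_T¹, p_T²) equals 3α/2. -/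
open MeasureTheory Set
open scoped Classical

/-! At `T = 1`, i.e. on `{U ≤ α/2}`, BH-I sees `(U, 1)` and rejects only the null hypothesis.
At `T = 2` it sees `(U, 0)`: it rejects both hypotheses if `U ≤ α` and only the non-null one
otherwise. The false discovery proportion is therefore `1` on `{U ≤ α/2}`, `1/2` on
`{α/2 < U ≤ α}` and `0` elsewhere, so its expectation is `α/2 + α/4 = 3α/4`. -/

/-- Rejection set of the Benjamini–Hochberg procedure under independence (BH-I) at level `α`. -/
noncomputable def bhiRejects (m : ℕ) (α : ℝ) (q : Fin m → ℝ) : Finset (Fin m) :=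
  Finset.univ.filter (fun i => ∃ j ∈ Finset.Icc 1 m,
    j ≤ (Finset.univ.filter (fun i' => q i' ≤ α * j / m)).card ∧ q i ≤ α * j / m)

noncomputable def falseDiscoveryProportion {m : ℕ} (nulls R : Finset (Fin m)) : ℝ :=
  ((R ∩ nulls).card : ℝ) / max 1 (R.card : ℝ)

lemma mem_bhiRejects_two {α : ℝ} {q : Fin 2 → ℝ} {i : Fin 2} :
    i ∈ bhiRejects 2 α q ↔
      q i ≤ α / 2 ∧ (q 0 ≤ α / 2 ∨ q 1 ≤ α / 2) ∨ q i ≤ α ∧ q 0 ≤ α ∧ q 1 ≤ α := by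
  have hIcc : Finset.Icc 1 2 = {1, 2} := rfl
  simp only [bhiRejects, Finset.mem_filter, Finset.mem_univ, true_and, hIcc,
    Finset.exists_mem_insert, Finset.mem_singleton, exists_eq_left, Finset.card_filter,
    Fin.sum_univ_two]
  norm_num
  split_ifs <;> simp_all

lemma bhiRejects_two_of_le_half_of_eq_one {α : ℝ} (hα : α < 1) {q : Fin 2 → ℝ}
    (hq0 : q 0 ≤ α / 2) (hq1 : q 1 = 1) : bhiRejects 2 α q = {0} := by
  ext i
  fin_cases i <;> simp only [mem_bhiRejects_two, hq1] <;> grind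

lemma bhiRejects_two_of_le_of_eq_zero {α : ℝ} (hα : 0 < α) {q : Fin 2 → ℝ}
    (hq0 : q 0 ≤ α) (hq1 : q 1 = 0) : bhiRejects 2 α q = Finset.univ := by
  ext i
  fin_cases i <;> simp only [mem_bhiRejects_two, hq1] <;> grind

lemma bhiRejects_two_of_lt_of_eq_zero {α : ℝ} (hα : 0 < α) {q : Fin 2 → ℝ}
    (hq0 : α < q 0) (hq1 : q 1 = 0) : bhiRejects 2 α q = {1} := by
  ext i
  fin_cases i <;> simp only [mem_bhiRejects_two, hq1] <;> grind

lemma falseDiscoveryProportion_bhiRejects_two {α : ℝ} (hα : α ∈ Ioo 0 1) {q : Fin 2 → ℝ}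
    (hq1 : q 1 = if q 0 ≤ α / 2 then 1 else 0) :
    falseDiscoveryProportion {0} (bhiRejects 2 α q) =
      (Iic (α / 2)).indicator (fun _ => 1) (q 0) + (Ioc (α / 2) α).indicator (fun _ => 1 / 2) (q 0) := by
  obtain ⟨hα0, hα1⟩ := hα
  by_cases hhalf : q 0 ≤ α / 2
  · rw [if_pos hhalf] at hq1
    rw [bhiRejects_two_of_le_half_of_eq_one hα1 hhalf hq1, indicator_of_mem (mem_Iic.2 hhalf),
      indicator_of_notMem fun h => (not_lt.2 hhalf) h.1]
    norm_num [falseDiscoveryProportion]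
  rw [if_neg hhalf] at hq1
  rw [not_le] at hhalf
  rw [indicator_of_notMem (notMem_Iic.2 hhalf)]
  by_cases hle : q 0 ≤ α
  · rw [bhiRejects_two_of_le_of_eq_zero hα0 hle hq1, indicator_of_mem (mem_Ioc.2 ⟨hhalf, hle⟩)]
    norm_num [falseDiscoveryProportion]
  · rw [bhiRejects_two_of_lt_of_eq_zero hα0 (not_le.1 hle) hq1,
      indicator_of_notMem fun h => hle h.2]
    norm_num [falseDiscoveryProportion]

section Uniform

variable {Ω : Type*} {m0 : MeasurableSpace Ω} {μ : Measure Ω} {U : Ω → ℝ}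

lemma integrable_indicator_comp [IsFiniteMeasure μ] (hUmeas : Measurable U) {s : Set ℝ}
    (hs : MeasurableSet s) (c : ℝ) : Integrable (fun ω => s.indicator (fun _ => c) (U ω)) μ :=
  (integrable_const c).indicator (hUmeas hs)

lemma integral_indicator_comp (hUmeas : Measurable U) {s : Set ℝ} (hs : MeasurableSet s) (c : ℝ) :
    ∫ ω, s.indicator (fun _ => c) (U ω) ∂μ = μ.real (U ⁻¹' s) * c :=
  integral_indicator_const c (hUmeas hs)

lemma measureReal_preimage_Iic_of_uniform
    (hU : ∀ s ∈ Icc (0:ℝ) 1, μ {ω | U ω ≤ s} = ENNReal.ofReal s) {s : ℝ} (hs : s ∈ Icc 0 1) :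
    μ.real (U ⁻¹' Iic s) = s := by
  change (μ {ω | U ω ≤ s}).toReal = s
  rw [hU s hs, ENNReal.toReal_ofReal hs.1]

lemma measureReal_preimage_Ioc_of_uniform [IsFiniteMeasure μ] (hUmeas : Measurable U)
    (hU : ∀ s ∈ Icc (0:ℝ) 1, μ {ω | U ω ≤ s} = ENNReal.ofReal s)
    {a b : ℝ} (ha : 0 ≤ a) (hab : a ≤ b) (hb : b ≤ 1) :
    μ.real (U ⁻¹' Ioc a b) = b - a := by
  have hdiff : U ⁻¹' Ioc a b = U ⁻¹' Iic b \ U ⁻¹' Iic a := by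
    ext ω
    simp [and_comm]
  rw [hdiff, measureReal_sdiff (preimage_mono (Iic_subset_Iic.2 hab)) (hUmeas measurableSet_Iic),
    measureReal_preimage_Iic_of_uniform hU ⟨ha.trans hab, hb⟩,
    measureReal_preimage_Iic_of_uniform hU ⟨ha, hab.trans hb⟩]

end Uniform

/-- counterexample: BH-I does not commute with always validity: with `m = 2`,
`p_n¹ ≡ U ~ Uniform(0,1)` (hypothesis 1 truly null), `p₁² = 1`, `p_n² = 0` for `n ≥ 2`
(hypothesis 2 non-null), and the stopping time `T = 1` if `U ≤ α/2`, else `T = 2`, the FDR of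
BH-I at level `α` applied to `(p_T¹, p_T²)` equals `3α/4 = (3/2)·(α·m₀/m)`, inflating the FDR
above the null-proportion-adjusted level `α·m₀/m = α/2` by a factor `3/2`. -/
theorem bhi_always_valid_counterexample
    {Ω : Type*} {m0 : MeasurableSpace Ω} (μ : Measure Ω) [IsProbabilityMeasure μ]
    (U : Ω → ℝ) (hUmeas : Measurable U)
    -- U is uniform on [0,1]
    (hU : ∀ s ∈ Icc (0:ℝ) 1, μ {ω | U ω ≤ s} = ENNReal.ofReal s)
    (α : ℝ) (hα : α ∈ Ioo (0:ℝ) 1)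
    -- the two p-value processes (indices: 0 ↔ hypothesis 1, null; 1 ↔ hypothesis 2)
    (p : Fin 2 → ℕ → Ω → ℝ)
    (hp1 : ∀ n ω, p 0 n ω = U ω)
    (hp2one : ∀ ω, p 1 1 ω = 1) (hp2 : ∀ n, 2 ≤ n → ∀ ω, p 1 n ω = 0)
    -- the stopping time
    (T : Ω → ℕ) (hT : ∀ ω, T ω = if U ω ≤ α / 2 then 1 else 2) :
    (∫ ω, ((bhiRejects 2 α (fun i => p i (T ω) ω) ∩ {0}).card : ℝ) /
        max 1 ((bhiRejects 2 α (fun i => p i (T ω) ω)).card : ℝ) ∂μ)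
      = 3 * α / 4 ∧
    (3 * α / 4 = (3 / 2) * (α * (1 / 2 : ℝ))) := by
  refine ⟨?_, by ring⟩
  have hstopped : ∀ ω, p 1 (T ω) ω = if p 0 (T ω) ω ≤ α / 2 then 1 else 0 := fun ω => by
    rw [hT ω, hp1]
    split_ifs
    exacts [hp2one ω, hp2 2 le_rfl ω]
  have hfdp : ∀ ω, falseDiscoveryProportion {0} (bhiRejects 2 α fun i => p i (T ω) ω) =
      (Iic (α / 2)).indicator (fun _ => 1) (U ω) +
        (Ioc (α / 2) α).indicator (fun _ => 1 / 2) (U ω) := fun ω => by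
    rw [falseDiscoveryProportion_bhiRejects_two hα (hstopped ω), hp1]
  obtain ⟨hα0, hα1⟩ := hα
  calc _ = ∫ ω, ((Iic (α / 2)).indicator (fun _ => 1) (U ω) +
          (Ioc (α / 2) α).indicator (fun _ => 1 / 2) (U ω)) ∂μ :=
        integral_congr_ae (ae_of_all _ hfdp)
    _ = μ.real (U ⁻¹' Iic (α / 2)) * 1 + μ.real (U ⁻¹' Ioc (α / 2) α) * (1 / 2) := by
        rw [integral_add (integrable_indicator_comp hUmeas measurableSet_Iic _)
            (integrable_indicator_comp hUmeas measurableSet_Ioc _),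
          integral_indicator_comp hUmeas measurableSet_Iic,
          integral_indicator_comp hUmeas measurableSet_Ioc]
    _ = 3 * α / 4 := by
        rw [measureReal_preimage_Iic_of_uniform hU ⟨by linarith, by linarith⟩,
          measureReal_preimage_Ioc_of_uniform hUmeas hU (by linarith) (by linarith) hα1.le]
        ring
end
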